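/- Let a : V × V → ℝ be a symmetric coercive bilinear form on a real Hilbert space V, b : Q × V → ℝ a bounded bilinear form, J : Q → ℝ defined by J(q) = (1/2) s(q,q) for a symmetric positive semidefinite bilinear form s on Q, and ℓ ∈ V*. Then (u,p) ∈ V × Q is a saddle point of the modified Lagrangian L(v,q) = (1/2)a(v,v) + b(q,v) - ℓ(v) - J(q) (i.e., L(u,q) ≤ L(u,p) ≤ L(v,p) for all v ∈ V, q ∈ Q) if and only if a(u,w) + b(p,w) = ℓ(w) for all w ∈ V and b(q,u) - s(p,q) = 0 for all q ∈ Q. -/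
import Mathlib

lemma aux_quad (c d : ℝ) (h : ∀ t : ℝ, 0 ≤ c * t + d * t ^ 2) : c = 0 := by
  by_contra hc
  have hc2 : 0 < c ^ 2 := by positivity
  set ε : ℝ := 1 / (|d| + 1) with hε_def
  have hε : 0 < ε := by positivity
  have hdε : d * ε < 1 := by
    have h1 : d * ε ≤ |d| * ε := by
      apply mul_le_mul_of_nonneg_right (le_abs_self d) hε.le
    have h2 : |d| * ε < (|d| + 1) * ε := by
      apply mul_lt_mul_of_pos_right (by linarith) hε
    have h3 : (|d| + 1) * ε = 1 := by
      rw [hε_def]; field_simp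
    linarith
  have key := h (-ε * c)
  nlinarith [mul_pos (mul_pos hε hc2) (by linarith : (0:ℝ) < 1 - d * ε)]

theorem stmt_12 (V Q : Type*)
    [NormedAddCommGroup V] [InnerProductSpace ℝ V] [CompleteSpace V]
    [NormedAddCommGroup Q] [InnerProductSpace ℝ Q] [CompleteSpace Q]
    (a : V →ₗ[ℝ] V →ₗ[ℝ] ℝ) (b : Q →ₗ[ℝ] V →ₗ[ℝ] ℝ)
    (s : Q →ₗ[ℝ] Q →ₗ[ℝ] ℝ) (ℓ : V →ₗ[ℝ] ℝ)
    (ha_symm : ∀ v w : V, a v w = a w v)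
    (ha_bdd : ∃ Ca : ℝ, ∀ v w : V, |a v w| ≤ Ca * ‖v‖ * ‖w‖)
    (ha_coer : ∃ ca : ℝ, 0 < ca ∧ ∀ v : V, ca * ‖v‖^2 ≤ a v v)
    (hb_bdd : ∃ Cb : ℝ, ∀ (q : Q) (v : V), |b q v| ≤ Cb * ‖q‖ * ‖v‖)
    (hs_symm : ∀ p q : Q, s p q = s q p)
    (hs_psd : ∀ q : Q, 0 ≤ s q q)
    (hl_bdd : ∃ Cl : ℝ, ∀ v : V, |ℓ v| ≤ Cl * ‖v‖)
    (L : V → Q → ℝ)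
    (hL : ∀ (v : V) (q : Q),
      L v q = (1/2) * a v v + b q v - ℓ v - (1/2) * s q q)
    (u : V) (p : Q) :
    ((∀ q : Q, L u q ≤ L u p) ∧ (∀ v : V, L u p ≤ L v p)) ↔
      ((∀ w : V, a u w + b p w = ℓ w) ∧ (∀ q : Q, b q u - s p q = 0)) := by
  constructor
  · rintro ⟨h1, h2⟩
    constructor
    · intro w
      have key : ∀ t : ℝ, 0 ≤ (a u w + b p w - ℓ w) * t + (1/2 * a w w) * t ^ 2 := by
        intro t
        have h := h2 (u + t • w)
        rw [hL, hL] at h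
        simp only [map_add, map_smul, LinearMap.add_apply, LinearMap.smul_apply,
          smul_eq_mul] at h
        rw [ha_symm w u] at h
        ring_nf at h ⊢
        linarith
      have := aux_quad _ _ key
      linarith
    · intro q
      have key : ∀ t : ℝ, 0 ≤ (-(b q u - s p q)) * t + (1/2 * s q q) * t ^ 2 := by
        intro t
        have h := h1 (p + t • q)
        rw [hL, hL] at h
        simp only [map_add, map_smul, LinearMap.add_apply, LinearMap.smul_apply,
          smul_eq_mul] at h
        rw [hs_symm q p] at h
        ring_nf at h ⊢
        linarith
      have := aux_quad _ _ key
      linarith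
  · rintro ⟨h1, h2⟩
    constructor
    · intro q
      rw [hL, hL]
      have e1 := h2 (q - p)
      simp only [map_sub, LinearMap.sub_apply] at e1
      have hsy := hs_symm p q
      have hsd := hs_psd (q - p)
      simp only [map_sub, LinearMap.sub_apply] at hsd
      nlinarith
    · intro v
      rw [hL, hL]
      have e1 := h1 (v - u)
      simp only [map_sub, LinearMap.sub_apply] at e1
      obtain ⟨ca, hca, hcoer⟩ := ha_coer
      have had : 0 ≤ a (v - u) (v - u) := le_trans (by positivity) (hcoer (v - u))
      simp only [map_sub, LinearMap.sub_apply] at had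
      have hsy := ha_symm u v
      nlinarith
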